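/- Let (T_+, T_-) be a tree diagram with n leaves, and let (H_+, H_-) be obtained by attaching the root of T_+ to the first (leftmost) leaf of the source tree of the reduced tree diagram representing a = x_0^3 x_2^{-1} x_0^{-3}, and attaching the root of T_- to the first leaf of its target tree. Then (H_+, H_-) is reduced if and only if (T_+, T_-) is reduced, and the reduced representative of (H_+, H_-) has exactly four more leaves than the reduced representative of (T_+, T_-). -/

import Mathlib

/-- A rooted finite binary tree: every node has 0 or 2 children. -/
inductive BTree where
  | leaf : BTree
  | node : BTree → BTree → BTree
deriving DecidableEq, Repr

namespace BTree

/-- number of leaves -/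
def numLeaves : BTree → ℕ
  | leaf => 1
  | node l r => numLeaves l + numLeaves r

/-- number of internal (binary) nodes, i.e. carets -/
def numInternal : BTree → ℕ
  | leaf => 0
  | node l r => numInternal l + numInternal r + 1

/-- replace the `k`-th leaf (0-indexed, from the left) by the tree `s` -/
def leafSubst : BTree → ℕ → BTree → BTree
  | leaf, 0, s => s
  | leaf, _+1, _ => leaf
  | node l r, k, s =>
      if k < l.numLeaves then node (leafSubst l k s) r
      else node l (leafSubst r (k - l.numLeaves) s)

/-- a caret: a binary node with two leaf children -/
def caret : BTree := node leaf leaf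

/-- attach a caret to the `k`-th leaf -/
def graftAt (t : BTree) (k : ℕ) : BTree := leafSubst t k caret

/-- the right comb (all-right vine) with `n` internal nodes, i.e. `n+1` leaves -/
def rightComb : ℕ → BTree
  | 0 => leaf
  | n+1 => node leaf (rightComb n)

end BTree

open BTree

/-- A tree diagram: a pair (source tree, target tree). -/
abbrev TreeDiagram := BTree × BTree

namespace TreeDiagram

/-- a genuine tree diagram has the same number of leaves in both trees -/
def IsValid (d : TreeDiagram) : Prop := d.1.numLeaves = d.2.numLeaves

/-- elementary expansion: attach a caret to the `k`-th leaf of both trees -/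
def Expand (d d' : TreeDiagram) : Prop :=
  ∃ k, k < d.1.numLeaves ∧ k < d.2.numLeaves ∧
    d' = (graftAt d.1 k, graftAt d.2 k)

/-- elementary reduction: remove a matching pair of carets at corresponding
adjacent leaves of the source and target trees -/
def Reduce (d d' : TreeDiagram) : Prop :=
  ∃ k, k < d'.1.numLeaves ∧ k < d'.2.numLeaves ∧
    d = (graftAt d'.1 k, graftAt d'.2 k)

/-- one move: an elementary expansion or an elementary reduction -/
def Move (d d' : TreeDiagram) : Prop := Expand d d' ∨ Reduce d d'

/-- equivalence of tree diagrams: generated by elementary expansions and reductions -/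
def Equiv : TreeDiagram → TreeDiagram → Prop := Relation.EqvGen Move

/-- a tree diagram is reduced if no elementary reduction applies to it -/
def Reduced (d : TreeDiagram) : Prop := ¬ ∃ d', Reduce d d'

/-- least common refinement of two binary trees -/
def sup : BTree → BTree → BTree
  | .leaf, s => s
  | .node l r, .leaf => .node l r
  | .node l r, .node l' r' => .node (sup l l') (sup r r')

/-- given `t` and a refinement `u` of `t`, the list of trees grafted at the leaves of `t` -/
def decomp : BTree → BTree → List BTree
  | .leaf, u => [u]
  | .node l r, .leaf => [.node l r]
  | .node l r, .node l' r' => decomp l l' ++ decomp r r'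

/-- graft the trees of the list at the successive leaves of `t` -/
def graftList : BTree → List BTree → BTree
  | .leaf, (u :: _) => u
  | .leaf, [] => .leaf
  | .node l r, us => .node (graftList l (us.take l.numLeaves)) (graftList r (us.drop l.numLeaves))

/-- multiplication of tree diagrams: expand both diagrams so that the target tree of the
first coincides with the source tree of the second (concatenation), then compose -/
def mul (d e : TreeDiagram) : TreeDiagram :=
  let m := sup d.2 e.1
  (graftList d.1 (decomp d.2 m), graftList e.2 (decomp e.1 m))

/-- the inverse tree diagram -/
def inv (d : TreeDiagram) : TreeDiagram := (d.2, d.1)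

/-- the trivial tree diagram -/
def one : TreeDiagram := (BTree.leaf, BTree.leaf)

/-- two tree diagrams represent conjugate elements of Thompson's group `F` -/
def IsConjTD (d e : TreeDiagram) : Prop :=
  ∃ g : TreeDiagram, Equiv (mul (mul g d) (inv g)) e

/-- the generator `x₀` as a tree diagram -/
def x0TD : TreeDiagram :=
  (.node (.node .leaf .leaf) .leaf, .node .leaf (.node .leaf .leaf))

/-- the generators `xₙ` as tree diagrams -/
def xTD : ℕ → TreeDiagram
  | 0 => x0TD
  | n+1 => (.node .leaf (xTD n).1, .node .leaf (xTD n).2)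

/-- a positive element: a reduced tree diagram whose target tree is the right comb -/
def Positive (d : TreeDiagram) : Prop :=
  Reduced d ∧ ∃ m, d.1.numLeaves = m + 1 ∧ d.2 = rightComb m

/-- the source tree of the reduced tree diagram of `a = x₀³ x₂⁻¹ x₀⁻³` -/
def aPlus : BTree := .node (.node (.node .leaf .leaf) .leaf) (.node .leaf .leaf)

/-- the target tree of the reduced tree diagram of `a = x₀³ x₂⁻¹ x₀⁻³` -/
def aMinus : BTree := .node (.node (.node .leaf (.node .leaf .leaf)) .leaf) .leaf

/-- graft a tree diagram onto the first (leftmost) leaves of the reduced tree diagram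
of `a = x₀³ x₂⁻¹ x₀⁻³` -/
def graftA (d : TreeDiagram) : TreeDiagram :=
  (leafSubst aPlus 0 d.1, leafSubst aMinus 0 d.2)

end TreeDiagram

open TreeDiagram

/-! A caret of `H₊` is a caret of `T₊`, the caret of `a` at position `n + 2`, or (when `T₊` is a
leaf) the caret at position `0`; a caret of `H₋` is a caret of `T₋` or the caret of `a` at
position `n`. The extra positions never match, so `(H₊, H₋)` and `(T₊, T₋)` admit the same
reductions. Grafting commutes with elementary moves, and elementary reductions have the diamond
property, so an equivalence class contains at most one reduced diagram; hence the reduced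
representative of `(H₊, H₋)` is the graft of that of `(T₊, T₋)`, which has four more leaves. -/

namespace BTree

theorem numLeaves_pos (t : BTree) : 0 < t.numLeaves := by
  induction t with
  | leaf => exact Nat.one_pos
  | node l r ihl _ => exact Nat.add_pos_left ihl _

theorem leafSubst_node_of_lt {l : BTree} (r : BTree) {k : ℕ} (h : k < l.numLeaves) (s : BTree) :
    leafSubst (node l r) k s = node (leafSubst l k s) r := by
  simp [leafSubst, h]

theorem leafSubst_node_of_le (l : BTree) {r : BTree} {k : ℕ} (h : l.numLeaves ≤ k) (s : BTree) :
    leafSubst (node l r) k s = node l (leafSubst r (k - l.numLeaves) s) := by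
  simp [leafSubst, Nat.not_lt.mpr h]

theorem numLeaves_leafSubst (s : BTree) {t : BTree} {k : ℕ} (hk : k < t.numLeaves) :
    (leafSubst t k s).numLeaves + 1 = t.numLeaves + s.numLeaves := by
  induction t generalizing k with
  | leaf =>
    obtain rfl : k = 0 := Nat.lt_one_iff.mp hk
    simp [leafSubst, numLeaves, Nat.add_comm]
  | node l r ihl ihr =>
    simp only [numLeaves] at hk ⊢
    by_cases h : k < l.numLeaves
    · rw [leafSubst_node_of_lt r h, numLeaves]
      have := ihl h
      omega
    · rw [leafSubst_node_of_le l (Nat.not_lt.mp h), numLeaves]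
      have := ihr (k := k - l.numLeaves) (by omega)
      omega

theorem numLeaves_graftAt {t : BTree} {k : ℕ} (h : k < t.numLeaves) :
    (graftAt t k).numLeaves = t.numLeaves + 1 := by
  have := numLeaves_leafSubst caret h
  simp only [graftAt, caret, numLeaves] at this ⊢
  omega

theorem graftAt_node_of_lt {l : BTree} (r : BTree) {k : ℕ} (h : k < l.numLeaves) :
    graftAt (node l r) k = node (graftAt l k) r :=
  leafSubst_node_of_lt r h caret

theorem graftAt_node_of_le (l : BTree) {r : BTree} {k : ℕ} (h : l.numLeaves ≤ k) :
    graftAt (node l r) k = node l (graftAt r (k - l.numLeaves)) :=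
  leafSubst_node_of_le l h caret

theorem graftAt_ne_leaf {t : BTree} {k : ℕ} (h : k < t.numLeaves) : graftAt t k ≠ leaf := by
  intro he
  have := numLeaves_graftAt h
  rw [he, numLeaves] at this
  have := numLeaves_pos t
  omega

theorem eq_leaf_of_numLeaves_eq_one {t : BTree} (h : t.numLeaves = 1) : t = leaf := by
  cases t with
  | leaf => rfl
  | node l r =>
    have := numLeaves_pos l
    have := numLeaves_pos r
    simp only [numLeaves] at h
    omega

theorem graftAt_inj {u u' : BTree} {k : ℕ} (hk : k < u.numLeaves) (hk' : k < u'.numLeaves)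
    (h : graftAt u k = graftAt u' k) : u = u' := by
  have hn := congrArg numLeaves h
  rw [numLeaves_graftAt hk, numLeaves_graftAt hk'] at hn
  induction u generalizing u' k with
  | leaf => exact (eq_leaf_of_numLeaves_eq_one (by simp only [numLeaves] at hn; omega)).symm
  | node l r ihl ihr =>
    cases u' with
    | leaf =>
      have := numLeaves_pos l
      have := numLeaves_pos r
      simp only [numLeaves] at hn
      omega
    | node l' r' =>
      simp only [numLeaves] at hk hk' hn
      by_cases hl : k < l.numLeaves <;> by_cases hl' : k < l'.numLeaves
      · rw [graftAt_node_of_lt r hl, graftAt_node_of_lt r' hl'] at h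
        obtain ⟨hg, rfl⟩ := node.inj h
        rw [ihl hl hl' hg (by omega)]
      · rw [graftAt_node_of_lt r hl, graftAt_node_of_le l' (Nat.not_lt.mp hl')] at h
        obtain ⟨rfl, -⟩ := node.inj h
        rw [numLeaves_graftAt hl] at hl'
        omega
      · rw [graftAt_node_of_le l (Nat.not_lt.mp hl), graftAt_node_of_lt r' hl'] at h
        obtain ⟨rfl, -⟩ := node.inj h
        rw [numLeaves_graftAt hl'] at hl
        omega
      · rw [graftAt_node_of_le l (Nat.not_lt.mp hl),
          graftAt_node_of_le l' (Nat.not_lt.mp hl')] at h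
        obtain ⟨rfl, hg⟩ := node.inj h
        rw [ihr (by omega) (by omega) hg (by omega)]

theorem exists_graftAt_of_graftAt_eq_graftAt_succ {u u' : BTree} {k k' : ℕ} (hkk : k ≤ k')
    (hk : k < u.numLeaves) (hk' : k' + 1 < u'.numLeaves) (h : graftAt u k = graftAt u' (k' + 1)) :
    ∃ v, k' < v.numLeaves ∧ k < v.numLeaves ∧ u = graftAt v k' ∧ u' = graftAt v k := by
  induction u generalizing u' k k' with
  | leaf =>
    have hn := congrArg numLeaves h
    rw [numLeaves_graftAt hk, numLeaves_graftAt hk'] at hn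
    simp only [numLeaves] at hn
    omega
  | node l r ihl ihr =>
    cases u' with
    | leaf => simp only [numLeaves] at hk'; omega
    | node l' r' =>
      simp only [numLeaves] at hk hk'
      by_cases hl : k < l.numLeaves <;> by_cases hl' : k' + 1 < l'.numLeaves
      · rw [graftAt_node_of_lt r hl, graftAt_node_of_lt r' hl'] at h
        obtain ⟨hg, rfl⟩ := node.inj h
        obtain ⟨v, hv', hv, rfl, rfl⟩ := ihl hkk hl hl' hg
        exact ⟨node v r, by simp only [numLeaves]; omega, by simp only [numLeaves]; omega,
          (graftAt_node_of_lt r hv').symm, (graftAt_node_of_lt r hv).symm⟩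
      · rw [graftAt_node_of_lt r hl, graftAt_node_of_le l' (Nat.not_lt.mp hl')] at h
        obtain ⟨rfl, rfl⟩ := node.inj h
        rw [numLeaves_graftAt hl] at hl' hk' ⊢
        refine ⟨node l r', by simp only [numLeaves]; omega, by simp only [numLeaves]; omega, ?_,
          (graftAt_node_of_lt r' hl).symm⟩
        rw [graftAt_node_of_le l (by omega : l.numLeaves ≤ k')]
        congr 2
        omega
      · rw [graftAt_node_of_le l (Nat.not_lt.mp hl), graftAt_node_of_lt r' hl'] at h
        obtain ⟨rfl, -⟩ := node.inj h
        rw [numLeaves_graftAt hl'] at hl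
        omega
      · rw [graftAt_node_of_le l (Nat.not_lt.mp hl),
          graftAt_node_of_le l' (Nat.not_lt.mp hl')] at h
        obtain ⟨rfl, hg⟩ := node.inj h
        obtain ⟨w, hw', hw, rfl, rfl⟩ :=
          ihr (u' := r') (k := k - l.numLeaves) (k' := k' - l.numLeaves)
            (by omega) (by omega) (by omega) (by rwa [show k' - l.numLeaves + 1 = k' + 1 - l.numLeaves by omega])
        refine ⟨node l w, by simp only [numLeaves]; omega, by simp only [numLeaves]; omega, ?_, ?_⟩
        · rw [graftAt_node_of_le l (by omega : l.numLeaves ≤ k')]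
        · rw [graftAt_node_of_le l (by omega : l.numLeaves ≤ k)]

theorem numLeaves_le_numLeaves_leafSubst_zero (t s : BTree) :
    s.numLeaves ≤ (leafSubst t 0 s).numLeaves := by
  have := numLeaves_leafSubst s (numLeaves_pos t)
  have := numLeaves_pos t
  omega

theorem graftAt_leafSubst_zero (t : BTree) {s : BTree} {k : ℕ} (h : k < s.numLeaves) :
    graftAt (leafSubst t 0 s) k = leafSubst t 0 (graftAt s k) := by
  induction t with
  | leaf => rfl
  | node l r ihl _ =>
    have hk := h.trans_le (numLeaves_le_numLeaves_leafSubst_zero l s)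
    rw [leafSubst_node_of_lt r (numLeaves_pos l), leafSubst_node_of_lt r (numLeaves_pos l),
      graftAt_node_of_lt r hk, ihl]

def HasCaretAt (t : BTree) (k : ℕ) : Prop := ∃ u, k < u.numLeaves ∧ t = graftAt u k

theorem not_hasCaretAt_leaf (k : ℕ) : ¬ HasCaretAt leaf k :=
  fun ⟨_, hu, h⟩ => graftAt_ne_leaf hu h.symm

theorem HasCaretAt.succ_lt_numLeaves {t : BTree} {k : ℕ} (h : HasCaretAt t k) :
    k + 1 < t.numLeaves := by
  obtain ⟨u, hu, rfl⟩ := h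
  rw [numLeaves_graftAt hu]
  omega

theorem hasCaretAt_node {l r : BTree} {k : ℕ} :
    HasCaretAt (node l r) k ↔
      (l = leaf ∧ r = leaf ∧ k = 0) ∨ HasCaretAt l k ∨
        (l.numLeaves ≤ k ∧ HasCaretAt r (k - l.numLeaves)) := by
  constructor
  · rintro ⟨u, hu, h⟩
    cases u with
    | leaf =>
      obtain rfl : k = 0 := Nat.lt_one_iff.mp hu
      obtain ⟨rfl, rfl⟩ := node.inj h
      exact Or.inl ⟨rfl, rfl, rfl⟩
    | node a b =>
      simp only [numLeaves] at hu
      by_cases ha : k < a.numLeaves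
      · rw [graftAt_node_of_lt b ha] at h
        obtain ⟨rfl, rfl⟩ := node.inj h
        exact Or.inr (Or.inl ⟨a, ha, rfl⟩)
      · rw [graftAt_node_of_le a (Nat.not_lt.mp ha)] at h
        obtain ⟨rfl, rfl⟩ := node.inj h
        exact Or.inr (Or.inr ⟨Nat.not_lt.mp ha, b, by omega, rfl⟩)
  · rintro (⟨rfl, rfl, rfl⟩ | ⟨a, ha, rfl⟩ | ⟨hl, b, hb, rfl⟩)
    · exact ⟨leaf, Nat.one_pos, rfl⟩
    · exact ⟨node a r, by simp only [numLeaves]; omega, (graftAt_node_of_lt r ha).symm⟩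
    · refine ⟨node l b, by simp only [numLeaves]; omega, ?_⟩
      rw [graftAt_node_of_le l hl]

end BTree

namespace TreeDiagram

theorem reduced_iff {d : TreeDiagram} :
    Reduced d ↔ ∀ k, HasCaretAt d.1 k → ¬ HasCaretAt d.2 k := by
  constructor
  · rintro h k ⟨u, hu, h₁⟩ ⟨v, hv, h₂⟩
    exact h ⟨(u, v), k, hu, hv, Prod.ext h₁ h₂⟩
  · rintro h ⟨e, k, h₁, h₂, rfl⟩
    exact h k ⟨_, h₁, rfl⟩ ⟨_, h₂, rfl⟩

theorem reduce_diamond {d e₁ e₂ : TreeDiagram} (h₁ : Reduce d e₁) (h₂ : Reduce d e₂) :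
    ∃ f, Relation.ReflGen Reduce e₁ f ∧ Relation.ReflGen Reduce e₂ f := by
  obtain ⟨k, hk₁, hk₂, rfl⟩ := h₁
  obtain ⟨k', hk₁', hk₂', he⟩ := h₂
  wlog hkk : k ≤ k' generalizing e₁ e₂ k k'
  · obtain ⟨f, h₂, h₁⟩ := this k' hk₁' hk₂' k hk₁ hk₂ he.symm (by omega)
    exact ⟨f, h₁, h₂⟩
  obtain ⟨he₁, he₂⟩ := Prod.mk.inj he
  rcases hkk.eq_or_lt with rfl | hlt
  · have : e₁ = e₂ := Prod.ext (graftAt_inj hk₁ hk₁' he₁) (graftAt_inj hk₂ hk₂' he₂)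
    exact ⟨e₁, .refl, this ▸ .refl⟩
  obtain ⟨j, rfl⟩ : ∃ j, k' = j + 1 := ⟨k' - 1, by omega⟩
  obtain ⟨v₁, hv₁', hv₁, h₁, h₁'⟩ :=
    exists_graftAt_of_graftAt_eq_graftAt_succ (by omega) hk₁ hk₁' he₁
  obtain ⟨v₂, hv₂', hv₂, h₂, h₂'⟩ :=
    exists_graftAt_of_graftAt_eq_graftAt_succ (by omega) hk₂ hk₂' he₂
  exact ⟨(v₁, v₂), .single ⟨j, hv₁', hv₂', Prod.ext h₁ h₂⟩,
    .single ⟨k, hv₁, hv₂, Prod.ext h₁' h₂'⟩⟩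

theorem Reduced.eq_of_reflTransGen {d e : TreeDiagram} (hd : Reduced d)
    (h : Relation.ReflTransGen Reduce d e) : d = e := by
  rcases Relation.ReflTransGen.cases_head h with rfl | ⟨c, hc, -⟩
  · rfl
  · exact absurd ⟨c, hc⟩ hd

theorem Reduced.eq_of_equiv {d e : TreeDiagram} (hd : Reduced d) (he : Reduced e)
    (h : Equiv d e) : d = e := by
  have confluent := Relation.equivalence_join_reflTransGen (r := Reduce) fun _ _ _ h₁ h₂ =>
    (reduce_diamond h₁ h₂).imp fun _ hf => ⟨hf.1, hf.2.to_reflTransGen⟩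
  obtain ⟨c, hdc, hec⟩ := confluent.eqvGen_iff.mp <| h.mono fun a b hab =>
    hab.elim (fun hE => ⟨a, .refl, .single hE⟩) (fun hR => ⟨b, .single hR, .refl⟩)
  rw [hd.eq_of_reflTransGen hdc, he.eq_of_reflTransGen hec]

theorem Reduce.isValid_iff {d e : TreeDiagram} (h : Reduce d e) : IsValid d ↔ IsValid e := by
  obtain ⟨k, h₁, h₂, rfl⟩ := h
  simp only [IsValid, numLeaves_graftAt h₁, numLeaves_graftAt h₂, Nat.add_right_cancel_iff]

theorem Equiv.isValid_iff {d e : TreeDiagram} (h : Equiv d e) : IsValid d ↔ IsValid e :=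
  (Equivalence.comap ⟨Iff.refl, Iff.symm, Iff.trans⟩ IsValid).eqvGen_iff.mp <| h.mono fun _ _ hab =>
    hab.elim (fun hE => (Reduce.isValid_iff hE).symm) Reduce.isValid_iff

theorem graftA_fst (d : TreeDiagram) : (graftA d).1 = node (node (node d.1 leaf) leaf) caret :=
  rfl

theorem graftA_snd (d : TreeDiagram) : (graftA d).2 = node (node (node d.2 caret) leaf) leaf :=
  rfl

theorem numLeaves_graftA_fst (d : TreeDiagram) : (graftA d).1.numLeaves = d.1.numLeaves + 4 := by
  simp only [graftA_fst, caret, numLeaves]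

theorem Reduce.graftA {d e : TreeDiagram} (h : Reduce d e) : Reduce (graftA d) (graftA e) := by
  obtain ⟨k, h₁, h₂, rfl⟩ := h
  refine ⟨k, h₁.trans_le (numLeaves_le_numLeaves_leafSubst_zero _ _),
    h₂.trans_le (numLeaves_le_numLeaves_leafSubst_zero _ _), ?_⟩
  simp only [TreeDiagram.graftA, graftAt_leafSubst_zero _ h₁, graftAt_leafSubst_zero _ h₂]

theorem Equiv.graftA {d e : TreeDiagram} (h : Equiv d e) : Equiv (graftA d) (graftA e) :=
  (Equivalence.comap (Relation.EqvGen.is_equivalence Move) TreeDiagram.graftA).eqvGen_iff.mp <|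
    h.mono fun _ _ hm => .rel _ _ (hm.imp Reduce.graftA Reduce.graftA)

theorem hasCaretAt_graftA_fst {d : TreeDiagram} {k : ℕ} :
    HasCaretAt (graftA d).1 k ↔
      (d.1 = leaf ∧ k = 0) ∨ HasCaretAt d.1 k ∨ k = d.1.numLeaves + 2 := by
  simp only [graftA_fst, caret, hasCaretAt_node, not_hasCaretAt_leaf, numLeaves]
  grind

theorem hasCaretAt_graftA_snd {d : TreeDiagram} {k : ℕ} :
    HasCaretAt (graftA d).2 k ↔ HasCaretAt d.2 k ∨ k = d.2.numLeaves := by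
  simp only [graftA_snd, caret, hasCaretAt_node, not_hasCaretAt_leaf, numLeaves]
  grind

theorem reduced_graftA_iff {d : TreeDiagram} (hd : IsValid d) :
    Reduced (graftA d) ↔ Reduced d := by
  simp only [reduced_iff, hasCaretAt_graftA_fst, hasCaretAt_graftA_snd]
  refine forall_congr' fun k => ⟨fun h h₁ h₂ => h (.inr (.inl h₁)) (.inl h₂), ?_⟩
  have hn : d.1.numLeaves = d.2.numLeaves := hd
  have := numLeaves_pos d.2
  rintro h (⟨hleaf, rfl⟩ | hc₁ | hk) (hc₂ | hk')
  · have := hc₂.succ_lt_numLeaves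
    simp only [hleaf, numLeaves] at hn
    omega
  · omega
  · exact h hc₁ hc₂
  · have := hc₁.succ_lt_numLeaves
    omega
  · have := hc₂.succ_lt_numLeaves
    omega
  · omega

end TreeDiagram

/-- Grafting a tree diagram `(T₊, T₋)` onto the first leaves of the reduced tree diagram of
`a = x₀³ x₂⁻¹ x₀⁻³` gives a tree diagram `(H₊, H₋)` that is reduced iff `(T₊, T₋)` is, and
whose reduced representative has exactly four more leaves than that of `(T₊, T₋)`. -/
theorem graftA_reduced_iff_and_leaves (d : TreeDiagram) (hd : IsValid d) :
    (Reduced (graftA d) ↔ Reduced d) ∧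
    ∀ rd rH : TreeDiagram,
      Reduced rd → TreeDiagram.Equiv d rd →
      Reduced rH → TreeDiagram.Equiv (graftA d) rH →
      rH.1.numLeaves = rd.1.numLeaves + 4 := by
  refine ⟨reduced_graftA_iff hd, fun rd rH hrd hd_rd hrH hH_rH => ?_⟩
  have hrd_graftA : Reduced (graftA rd) := (reduced_graftA_iff (hd_rd.isValid_iff.mp hd)).mpr hrd
  have hrH_eq : rH = graftA rd :=
    hrH.eq_of_equiv hrd_graftA ((Relation.EqvGen.symm _ _ hH_rH).trans _ _ _ hd_rd.graftA)
  rw [hrH_eq, numLeaves_graftA_fst]
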